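/- For symmetric positive definite n×n matrices X and Y, tr(XY) - log det(X) ≥ n + log det(Y), with equality if and only if X = Y⁻¹. -/

import Mathlib

/-!
Conjugating by a factor `Y = Bᴴ B` turns `X` into the positive definite matrix `M = B X Bᴴ`, with
`tr M = tr (X Y)` and `det M = det X · det Y`, so it suffices to treat `Y = 1`. In terms of the
eigenvalues `λᵢ > 0` of `M`, `tr M - log det M - n = ∑ᵢ (λᵢ - 1 - log λᵢ)`, and each summand is
nonnegative with equality only at `λᵢ = 1`, i.e. only when `M = 1`, i.e. `X Y = 1`.
-/

open Matrix
open scoped MatrixOrder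

theorem Real.sub_one_sub_log_nonneg {x : ℝ} (hx : 0 < x) : 0 ≤ x - 1 - Real.log x := by
  linarith [Real.log_le_sub_one_of_pos hx]

theorem Real.sub_one_sub_log_eq_zero_iff {x : ℝ} (hx : 0 < x) :
    x - 1 - Real.log x = 0 ↔ x = 1 := by
  refine ⟨fun h ↦ ?_, fun h ↦ by simp [h]⟩
  by_contra hne
  linarith [Real.log_lt_sub_one_of_pos hx hne]

namespace Matrix

variable {ι : Type*} [Fintype ι] [DecidableEq ι]

theorem IsHermitian.eq_one_of_eigenvalues_eq_one {𝕜 : Type*} [RCLike 𝕜] {A : Matrix ι ι 𝕜}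
    (hA : A.IsHermitian) (h : ∀ i, hA.eigenvalues i = 1) : A = 1 := by
  rw [hA.spectral_theorem, funext h]
  simp [Function.comp_def, Unitary.mul_star_self_of_mem]

section LogDet

variable {M : Matrix ι ι ℝ}

theorem PosDef.trace_sub_log_det_sub_card (hM : M.PosDef) :
    M.trace - Real.log M.det - Fintype.card ι =
      ∑ i, (hM.1.eigenvalues i - 1 - Real.log (hM.1.eigenvalues i)) := by
  rw [hM.1.trace_eq_sum_eigenvalues, hM.1.det_eq_prod_eigenvalues]
  simp only [RCLike.ofReal_real_eq_id, id]
  rw [Real.log_prod fun i _ ↦ (hM.eigenvalues_pos i).ne']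
  simp only [Finset.sum_sub_distrib, Finset.sum_const, Finset.card_univ, nsmul_eq_mul, mul_one]
  ring

theorem PosDef.card_le_trace_sub_log_det (hM : M.PosDef) :
    (Fintype.card ι : ℝ) ≤ M.trace - Real.log M.det := by
  have hsum : 0 ≤ ∑ i, (hM.1.eigenvalues i - 1 - Real.log (hM.1.eigenvalues i)) :=
    Finset.sum_nonneg fun i _ ↦ Real.sub_one_sub_log_nonneg (hM.eigenvalues_pos i)
  linarith [hM.trace_sub_log_det_sub_card]

theorem PosDef.trace_sub_log_det_eq_card_iff (hM : M.PosDef) :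
    M.trace - Real.log M.det = Fintype.card ι ↔ M = 1 := by
  refine ⟨fun h ↦ hM.1.eq_one_of_eigenvalues_eq_one fun i ↦ ?_, fun h ↦ by simp [h]⟩
  rw [← sub_eq_zero, hM.trace_sub_log_det_sub_card, Finset.sum_eq_zero_iff_of_nonneg
    fun i _ ↦ Real.sub_one_sub_log_nonneg (hM.eigenvalues_pos i)] at h
  exact (Real.sub_one_sub_log_eq_zero_iff (hM.eigenvalues_pos i)).1 (h i (Finset.mem_univ i))

theorem PosDef.exists_posDef_trace_sub_log_det_eq {X Y : Matrix ι ι ℝ} (hX : X.PosDef)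
    (hY : Y.PosDef) : ∃ M : Matrix ι ι ℝ, M.PosDef ∧
      M.trace - Real.log M.det = (X * Y).trace - Real.log X.det - Real.log Y.det ∧
      (M = 1 ↔ X * Y = 1) := by
  obtain ⟨B, rfl⟩ := CStarAlgebra.nonneg_iff_eq_star_mul_self.mp hY.posSemidef.nonneg
  have hB : IsUnit B := by
    refine (isUnit_iff_isUnit_det B).2 (isUnit_iff_ne_zero.2 fun h ↦ ?_)
    simpa [h] using hY.det_pos
  refine ⟨B * X * star B, hB.posDef_star_right_conjugate_iff.2 hX, ?_, ?_⟩
  · have hdet : (B * X * star B).det = X.det * (star B * B).det := by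
      simp only [det_mul]; ring
    rw [hdet, Real.log_mul hX.det_pos.ne' hY.det_pos.ne', trace_mul_cycle, trace_mul_comm]
    ring
  · rw [mul_assoc, mul_eq_one_comm, mul_assoc]

end LogDet

end Matrix

theorem logdet_lower_bound (n : ℕ) (X Y : Matrix (Fin n) (Fin n) ℝ)
    (hX : X.PosDef) (hY : Y.PosDef) :
    (X * Y).trace - Real.log X.det ≥ (n : ℝ) + Real.log Y.det ∧
    ((X * Y).trace - Real.log X.det = (n : ℝ) + Real.log Y.det ↔ X = Y⁻¹) := by
  obtain ⟨M, hM, hMXY, hM_eq_one⟩ := hX.exists_posDef_trace_sub_log_det_eq hY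
  have hinv : X = Y⁻¹ ↔ X * Y = 1 :=
    ⟨fun h ↦ h ▸ nonsing_inv_mul Y hY.det_pos.ne'.isUnit, fun h ↦ (inv_eq_left_inv h).symm⟩
  have hle := hM.card_le_trace_sub_log_det
  rw [Fintype.card_fin, hMXY] at hle
  refine ⟨by linarith, ?_⟩
  rw [hinv, ← hM_eq_one, ← hM.trace_sub_log_det_eq_card_iff, hMXY, Fintype.card_fin]
  constructor <;> intro h <;> linarith
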